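/- arXiv:1802.05222 — 2 statements merged into one kernel-verified Lean document; each statement's English description precedes it below -/
import Mathlib

section
/- Let V be an abelian group (written additively) and let G be a group acting on V by group automorphisms; consider the induced diagonal action of G on V^m. Let v_1, ..., v_m be elements of V such that the 2m elements v_1, -v_1, ..., v_m, -v_m are pairwise distinct. Assume: (i) the stabilizer in G of the tuple (v_1, ..., v_m) under the diagonal action is trivial; (ii) for each index i there exists an element e_i of G with e_i·v_i = -v_i and e_i·v_j = v_j for all j ≠ i; (iii) for each permutation σ of {1, ..., m} there exists an element s_σ of G with s_σ·v_j = v_{σ(j)} for all j. Then the setwise stabilizer in G of the 2m-element set {v_1, -v_1, ..., v_m, -v_m} is exactly the set of products e_1^{a_1}···e_m^{a_m}·s_σ with a_i ∈ {0,1} and σ a permutation, and this stabilizer is isomorphic to the hyperoctahedral group Z_2 ≀ Sym_m, i.e., to the semidirect product (Z/2Z)^m ⋊ Sym_m with Sym_m permuting the coordinates. -/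
open Pointwise

/-- The action of a permutation of `Fin m` on `(Fin m → Multiplicative (ZMod 2))`
by permuting coordinates, as a multiplicative automorphism. -/
def permMulAut (m : ℕ) (σ : Equiv.Perm (Fin m)) :
    MulAut (Fin m → Multiplicative (ZMod 2)) where
  toFun f := f ∘ σ.symm
  invFun f := f ∘ σ
  left_inv f := by funext i; simp
  right_inv f := by funext i; simp
  map_mul' f g := rfl

/-- The homomorphism `Sym_m → Aut((Z/2Z)^m)` permuting the coordinates. -/
def permHom (m : ℕ) :
    Equiv.Perm (Fin m) →* MulAut (Fin m → Multiplicative (ZMod 2)) where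
  toFun := permMulAut m
  map_one' := by
    refine MulEquiv.ext fun f => funext fun i => rfl
  map_mul' σ τ := by
    refine MulEquiv.ext fun f => funext fun i => rfl

/-- The hyperoctahedral group `Σ_m = Z_2 ≀ Sym_m = (Z/2Z)^m ⋊ Sym_m`. -/
def Wreath (m : ℕ) : Type :=
  (Fin m → Multiplicative (ZMod 2)) ⋊[permHom m] Equiv.Perm (Fin m)

instance (m : ℕ) : Group (Wreath m) :=
  inferInstanceAs (Group ((Fin m → Multiplicative (ZMod 2)) ⋊[permHom m] Equiv.Perm (Fin m)))


section Aux

variable {G V : Type*} [Group G] [AddCommGroup V] [DistribMulAction G V]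
  {m : ℕ} {v : Fin m → V} {e : Fin m → G}

/-- The product `e 1 ^ a 1 * ⋯ * e m ^ a m`. -/
def Ea (e : Fin m → G) (a : Fin m → Bool) : G :=
  (List.ofFn fun i => if a i then e i else 1).prod

theorem heqOf (hstab : ∀ g : G, (∀ i, g • v i = v i) → g = 1)
    {g h : G} (H : ∀ j, g • v j = h • v j) : g = h := by
  have h1 : h⁻¹ * g = 1 := hstab _ fun j => by
    rw [mul_smul, H j, inv_smul_smul]
  exact (inv_mul_eq_one.mp h1).symm

theorem Ea_smul (he : ∀ i : Fin m, e i • v i = -v i ∧ ∀ j : Fin m, j ≠ i → e i • v j = v j)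
    (a : Fin m → Bool) (j : Fin m) :
    Ea e a • v j = if a j then -v j else v j := by
  have key : ∀ n, n ≤ m →
      ((List.ofFn fun i => if a i then e i else 1).take n).prod • v j
        = if (j : ℕ) < n ∧ a j then -v j else v j := by
    intro n
    induction n with
    | zero => intro _; simp
    | succ n ih =>
      intro hn
      have hnm : n < m := hn
      have hn' : n < (List.ofFn fun i => if a i then e i else 1).length := by
        simpa using hnm
      rw [List.prod_take_succ _ n hn', mul_smul]
      have hget : (List.ofFn fun i => if a i then e i else 1)[n]
          = if a ⟨n, hnm⟩ then e ⟨n, hnm⟩ else 1 := by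
        simp
      rw [hget]
      by_cases hj : (j : ℕ) = n
      · have hjn : (⟨n, hnm⟩ : Fin m) = j := by
          exact Fin.ext hj.symm
        rw [hjn]
        by_cases ha : a j
        · rw [if_pos ha, (he j).1, smul_neg, ih (le_of_lt hnm),
            if_neg (by omega), if_pos ⟨by omega, ha⟩]
        · rw [if_neg ha, one_smul, ih (le_of_lt hnm), if_neg (by tauto),
            if_neg (by tauto)]
      · have hne : j ≠ ⟨n, hnm⟩ := by
          intro hEq; exact hj (by rw [hEq])
        have hfix : (if a ⟨n, hnm⟩ then e ⟨n, hnm⟩ else 1) • v j = v j := by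
          split
          · exact (he ⟨n, hnm⟩).2 j hne
          · exact one_smul _ _
        rw [hfix, ih (le_of_lt hnm)]
        have : ((j : ℕ) < n ∧ a j) ↔ ((j : ℕ) < n + 1 ∧ a j) := by
          constructor <;> rintro ⟨h1, h2⟩ <;> exact ⟨by omega, h2⟩
        simp only [this]
  have hlen : (List.ofFn fun i => if a i then e i else 1).take m
      = List.ofFn fun i => if a i then e i else 1 :=
    List.take_of_length_le (by simp)
  have := key m le_rfl
  rw [hlen] at this
  rw [Ea, this]
  simp [j.isLt]

theorem mem_stab_of (g : G) (σ : Equiv.Perm (Fin m)) (c : Fin m → Bool)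
    (hg : ∀ j, g • v j = if c j then -v (σ j) else v (σ j)) :
    g ∈ MulAction.stabilizer G ({x : V | ∃ i, x = v i ∨ x = -v i}) := by
  rw [MulAction.mem_stabilizer_iff]
  ext x
  simp only [Set.mem_smul_set, Set.mem_setOf_eq]
  constructor
  · rintro ⟨y, ⟨i, rfl | rfl⟩, rfl⟩
    · rw [hg i]
      exact ⟨σ i, by cases hc : c i <;> simp [hc]⟩
    · rw [smul_neg, hg i]
      exact ⟨σ i, by cases hc : c i <;> simp [hc]⟩
  · rintro ⟨i, rfl | rfl⟩
    · cases hc : c (σ.symm i)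
      · exact ⟨v (σ.symm i), ⟨σ.symm i, Or.inl rfl⟩, by rw [hg]; simp [hc]⟩
      · exact ⟨-v (σ.symm i), ⟨σ.symm i, Or.inr rfl⟩, by rw [smul_neg, hg]; simp [hc]⟩
    · cases hc : c (σ.symm i)
      · exact ⟨-v (σ.symm i), ⟨σ.symm i, Or.inr rfl⟩, by rw [smul_neg, hg]; simp [hc]⟩
      · exact ⟨v (σ.symm i), ⟨σ.symm i, Or.inl rfl⟩, by rw [hg]; simp [hc]⟩

theorem v_injective
    (hdist : Function.Injective fun p : Fin m × Bool => if p.2 then v p.1 else -v p.1) :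
    Function.Injective v := by
  intro i j h
  have h2 : (fun p : Fin m × Bool => if p.2 then v p.1 else -v p.1) (i, true)
      = (fun p : Fin m × Bool => if p.2 then v p.1 else -v p.1) (j, true) := by simpa using h
  simpa using congrArg Prod.fst (hdist h2)

theorem v_ne_neg
    (hdist : Function.Injective fun p : Fin m × Bool => if p.2 then v p.1 else -v p.1)
    (i j : Fin m) : v i ≠ -v j := by
  intro h
  have h2 : (fun p : Fin m × Bool => if p.2 then v p.1 else -v p.1) (i, true)
      = (fun p : Fin m × Bool => if p.2 then v p.1 else -v p.1) (j, false) := by simpa using h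
  simpa using congrArg Prod.snd (hdist h2)

/-- Reading off a `Bool` vector from an element of `(Z/2Z)^m`. -/
def aOfFun {m : ℕ} (x : Fin m → Multiplicative (ZMod 2)) (i : Fin m) : Bool :=
  decide (Multiplicative.toAdd (x i) = 1)

theorem aOfFun_mul {m : ℕ} (x y : Fin m → Multiplicative (ZMod 2)) (i : Fin m) :
    aOfFun (x * y) i = xor (aOfFun x i) (aOfFun y i) := by
  have zlem : ∀ p q : ZMod 2,
      decide (p + q = 1) = xor (decide (p = 1)) (decide (q = 1)) := by decide
  exact zlem (Multiplicative.toAdd (x i)) (Multiplicative.toAdd (y i))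

theorem aOfFun_one {m : ℕ} (i : Fin m) : aOfFun (1 : Fin m → Multiplicative (ZMod 2)) i = false := by
  simp [aOfFun]

end Aux

/-- Let `V` be an abelian group and `G` a group acting on `V` by group
automorphisms; consider the diagonal action of `G` on `V^m`.  Let `v 1, …, v m ∈ V` be such
that the `2m` elements `± v i` are pairwise distinct.  Assume (i) the stabilizer of the tuple
`(v 1, …, v m)` is trivial, (ii) for each `i` there is `e i ∈ G` with `e i • v i = - v i` and
`e i • v j = v j` for `j ≠ i`, and (iii) for each permutation `σ` there is `s σ ∈ G` with
`s σ • v j = v (σ j)` for all `j`.  Then the setwise stabilizer of `{± v 1, …, ± v m}` in `G`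
consists exactly of the products `e 1 ^ a 1 * ⋯ * e m ^ a m * s σ` with `a i ∈ {0, 1}`, and it
is isomorphic to the hyperoctahedral group `Z_2 ≀ Sym_m = (Z/2Z)^m ⋊ Sym_m`. -/
theorem setwise_stabilizer_is_hyperoctahedral
    (G V : Type*) [Group G] [AddCommGroup V] [DistribMulAction G V]
    (m : ℕ) (v : Fin m → V)
    (hdist : Function.Injective fun p : Fin m × Bool => if p.2 then v p.1 else -v p.1)
    (hstab : ∀ g : G, (∀ i, g • v i = v i) → g = 1)
    (e : Fin m → G)
    (he : ∀ i : Fin m, e i • v i = -v i ∧ ∀ j : Fin m, j ≠ i → e i • v j = v j)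
    (s : Equiv.Perm (Fin m) → G)
    (hs : ∀ (σ : Equiv.Perm (Fin m)) (j : Fin m), s σ • v j = v (σ j)) :
    (∀ g : G,
      g ∈ MulAction.stabilizer G ({x : V | ∃ i, x = v i ∨ x = -v i}) ↔
        ∃ (a : Fin m → Bool) (σ : Equiv.Perm (Fin m)),
          g = (List.ofFn fun i => if a i then e i else 1).prod * s σ) ∧
    Nonempty
      (MulAction.stabilizer G ({x : V | ∃ i, x = v i ∨ x = -v i}) ≃* Wreath m) := by
  have hvinj := v_injective hdist
  have hvne := v_ne_neg hdist
  -- Part 1: the characterization of the stabilizer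
  have hchar : ∀ g : G,
      g ∈ MulAction.stabilizer G ({x : V | ∃ i, x = v i ∨ x = -v i}) ↔
        ∃ (a : Fin m → Bool) (σ : Equiv.Perm (Fin m)), g = Ea e a * s σ := by
    intro g
    constructor
    · intro hg
      have hS : g • {x : V | ∃ i, x = v i ∨ x = -v i} = {x : V | ∃ i, x = v i ∨ x = -v i} :=
        hg
      have hmems : ∀ i : Fin m, ∃ (k : Fin m) (c : Bool),
          g • v i = if c then v k else -v k := by
        intro i
        have hmem : g • v i ∈ {x : V | ∃ i, x = v i ∨ x = -v i} := by
          rw [← hS]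
          exact Set.smul_mem_smul_set ⟨i, Or.inl rfl⟩
        obtain ⟨k, hk | hk⟩ := hmem
        · exact ⟨k, true, by simpa using hk⟩
        · exact ⟨k, false, by simpa using hk⟩
      choose f b hfb using hmems
      have hfinj : Function.Injective f := by
        intro i i' hii'
        have h1 := hfb i
        have h2 := hfb i'
        cases hbi : b i <;> cases hbi' : b i' <;>
          rw [hbi] at h1 <;> rw [hbi'] at h2 <;> simp at h1 h2
        · -- b i = false, b i' = false
          refine hvinj (smul_left_cancel g ?_)
          rw [h1, hii', h2]
        · -- b i = false, b i' = true : v i = - v i', contradiction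
          exfalso
          have : g • v i' = g • (-v i) := by
            rw [h2, smul_neg, h1, hii', neg_neg]
          exact hvne i' i (smul_left_cancel g this)
        · exfalso
          have : g • v i = g • (-v i') := by
            rw [h1, smul_neg, h2, hii', neg_neg]
          exact hvne i i' (smul_left_cancel g this)
        · refine hvinj (smul_left_cancel g ?_)
          rw [h1, hii', h2]
      let σ : Equiv.Perm (Fin m) := Equiv.ofBijective f (Finite.injective_iff_bijective.mp hfinj)
      refine ⟨fun k => !(b (σ.symm k)), σ, heqOf hstab fun j => ?_⟩
      rw [mul_smul, hs, Ea_smul he]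
      have hsymm : σ.symm (σ j) = j := σ.symm_apply_apply j
      have hσj : σ j = f j := rfl
      rw [hsymm, hfb j]
      cases hb : b j <;> simp [hb, hσj]
    · rintro ⟨a, σ, rfl⟩
      refine mem_stab_of _ σ (fun j => a (σ j)) fun j => ?_
      rw [mul_smul, hs, Ea_smul he]
  refine ⟨fun g => hchar g, ?_⟩
  -- Part 2: construction of the isomorphism
  have z0 : ∀ t : ZMod 2, ¬t = 1 → t = 0 := by decide
  let f₁ : (Fin m → Multiplicative (ZMod 2)) →* G :=
    { toFun := fun x => Ea e (aOfFun x)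
      map_one' := heqOf hstab fun j => by
        rw [Ea_smul he, one_smul, aOfFun_one, if_neg (by simp)]
      map_mul' := fun x y => heqOf hstab fun j => by
        rw [Ea_smul he, mul_smul, Ea_smul he, aOfFun_mul]
        cases hx : aOfFun x j <;> cases hy : aOfFun y j <;>
          simp [hx, hy, smul_neg, Ea_smul he] }
  let f₂ : Equiv.Perm (Fin m) →* G :=
    { toFun := s
      map_one' := hstab (s 1) fun j => by rw [hs]; rfl
      map_mul' := fun σ τ => heqOf hstab fun j => by
        rw [hs, mul_smul, hs, hs]; rfl }
  have hsinv : ∀ (σ : Equiv.Perm (Fin m)) (j : Fin m), (s σ)⁻¹ • v j = v (σ.symm j) := by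
    intro σ j
    rw [inv_smul_eq_iff, hs, Equiv.apply_symm_apply]
  have hcomp : ∀ σ : Equiv.Perm (Fin m),
      f₁.comp ((permHom m σ)).toMonoidHom = (MulAut.conj (f₂ σ)).toMonoidHom.comp f₁ := by
    intro σ
    ext x
    show Ea e (aOfFun (x ∘ σ.symm)) = s σ * Ea e (aOfFun x) * (s σ)⁻¹
    refine heqOf hstab fun j => ?_
    rw [Ea_smul he, mul_assoc, mul_smul, mul_smul, hsinv, Ea_smul he]
    have hc : aOfFun (x ∘ σ.symm) j = aOfFun x (σ.symm j) := rfl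
    rw [hc]
    cases h : aOfFun x (σ.symm j) <;>
      simp [h, smul_neg, hs, Equiv.apply_symm_apply]
  let φ : Wreath m →* G := SemidirectProduct.lift f₁ f₂ hcomp
  have hinj : Function.Injective φ := by
    rw [injective_iff_map_eq_one]
    rintro ⟨x, σ⟩ hw
    have hφ : φ ⟨x, σ⟩ = Ea e (aOfFun x) * s σ := rfl
    rw [hφ] at hw
    have hkey : ∀ j, σ j = j ∧ aOfFun x j = false := by
      intro j
      have h1 : (if aOfFun x (σ j) then -v (σ j) else v (σ j)) = v j := by
        rw [← Ea_smul he (aOfFun x) (σ j), ← hs σ j, ← mul_smul, hw, one_smul]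
      cases h : aOfFun x (σ j)
      · rw [h] at h1
        simp only [Bool.false_eq_true, if_false] at h1
        have hσj : σ j = j := hvinj h1
        rw [hσj] at h
        exact ⟨hσj, h⟩
      · rw [h] at h1
        simp only [if_true] at h1
        exact absurd h1.symm (hvne j (σ j))
    have hσ1 : σ = 1 := Equiv.ext fun j => (hkey j).1
    have hx1 : x = 1 := by
      funext i
      have h0 : Multiplicative.toAdd (x i) = 0 :=
        z0 _ (of_decide_eq_false ((hkey i).2))
      exact Multiplicative.toAdd.injective (by rw [h0]; rfl)
    rw [hσ1, hx1]
    rfl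
  have hrange : MulAction.stabilizer G ({x : V | ∃ i, x = v i ∨ x = -v i}) = φ.range := by
    ext g
    rw [hchar g, MonoidHom.mem_range]
    constructor
    · rintro ⟨a, σ, rfl⟩
      refine ⟨⟨fun i => Multiplicative.ofAdd (if a i then 1 else 0), σ⟩, ?_⟩
      have ha : aOfFun (fun i => Multiplicative.ofAdd (if a i then (1 : ZMod 2) else 0)) = a := by
        funext i
        cases h : a i <;> simp [aOfFun, h]
      show Ea e (aOfFun _) * s σ = _
      rw [ha]
    · rintro ⟨⟨x, σ⟩, rfl⟩
      exact ⟨aOfFun x, σ, rfl⟩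
  exact ⟨(MulEquiv.subgroupCongr hrange).trans (MonoidHom.ofInjective hinj).symm⟩
end

section
/- Let V be an abelian group (written additively) and let Q be a group acting faithfully on V by group automorphisms. Let [V,Q] denote the subgroup of V generated by all elements q·v − v with q ∈ Q and v ∈ V, and assume that every element of Q fixes [V,Q] pointwise. Then Q is abelian. Moreover, if p is a prime and p·v = 0 for all v ∈ V, then every element of Q satisfies q^p = 1, so Q is an elementary abelian p-group. -/
/-- Let `V` be an abelian group and `Q` a group acting faithfully on `V` by group
automorphisms.  Let `[V,Q]` be the subgroup of `V` generated by the elements `q • v - v`, and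
assume every element of `Q` fixes `[V,Q]` pointwise.  Then `Q` is abelian; moreover, if `p` is
a prime with `p • v = 0` for all `v ∈ V`, then `q ^ p = 1` for every `q ∈ Q`, so `Q` is an
elementary abelian `p`-group. -/
theorem abelian_of_centralizing_commutator_subgroup
    (Q V : Type*) [Group Q] [AddCommGroup V] [DistribMulAction Q V]
    (hfaith : ∀ q : Q, (∀ v : V, q • v = v) → q = 1)
    (hcent : ∀ q : Q, ∀ w ∈ AddSubgroup.closure
      {x : V | ∃ (q' : Q) (v : V), x = q' • v - v}, q • w = w) :
    (∀ a b : Q, a * b = b * a) ∧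
      (∀ p : ℕ, p.Prime → (∀ v : V, p • v = 0) → ∀ q : Q, q ^ p = 1) := by
  have key : ∀ (q q' : Q) (v : V), q • (q' • v) = q' • v - v + q • v := by
    intro q q' v
    have h := hcent q (q' • v - v) (AddSubgroup.subset_closure ⟨q', v, rfl⟩)
    have : q • (q' • v) = q • (q' • v - v + v) := by rw [sub_add_cancel]
    rw [this, smul_add, h]
  constructor
  · intro a b
    have h1 : ∀ v : V, (a * b) • v = (b * a) • v := by
      intro v
      rw [mul_smul, mul_smul, key a b v, key b a v]
      abel
    have := hfaith ((b * a)⁻¹ * (a * b)) (fun v => by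
      rw [mul_smul, h1, inv_smul_smul])
    exact inv_mul_eq_one.mp this |>.symm
  · intro p hp hpv q
    have pow_smul : ∀ (n : ℕ) (v : V), (q ^ n) • v = v + n • (q • v - v) := by
      intro n
      induction n with
      | zero => intro v; simp
      | succ n ih =>
        intro v
        have hm : q • v - v ∈ AddSubgroup.closure {x : V | ∃ (q' : Q) (v : V), x = q' • v - v} :=
          AddSubgroup.subset_closure ⟨q, v, rfl⟩
        have hw : q • ((n : ℕ) • (q • v - v)) = (n : ℕ) • (q • v - v) :=
          hcent q _ (AddSubgroup.nsmul_mem _ hm n)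
        rw [pow_succ', mul_smul, ih, smul_add, hw, succ_nsmul]
        abel
    apply hfaith
    intro v
    rw [pow_smul, hpv, add_zero]
end
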